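/- Let V ≥ 1, N ≥ 0, let β ∈ (0,1) satisfy the β-condition, and let λ > V · ∑_{n=0}^{N} β^n. For any count vectors a, b and stall durations d, e ∈ ℕ, the objective values satisfy f(a,d) > f(b,e) if and only if either d < e, or d = e and a >_lex b. Hence the objective f orders solutions first by minimizing the stall duration and then lexicographically by quality counts with lower levels more significant. -/

import Mathlib

/-!
The β-condition makes the weights `β^n` superincreasing for counts bounded by `V`: at the first
level where two count vectors differ, the gain `β^n` outweighs anything the later levels can
contribute, so the quality sum orders count vectors lexicographically. The quality sum lies in
`[0, V ∑ β^n]` and `λ` exceeds that width, so one unit of stall outweighs any quality difference.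
-/

open Finset

section WeightedSum

variable {w : ℕ → ℝ} {N V : ℕ}

lemma weightedSum_nonneg (hw : ∀ k, 0 ≤ w k) (x : ℕ → ℕ) :
    0 ≤ ∑ k ∈ range (N + 1), w k * (x k : ℝ) :=
  sum_nonneg fun k _ => mul_nonneg (hw k) (x k).cast_nonneg

lemma weightedSum_le (hw : ∀ k, 0 ≤ w k) {x : ℕ → ℕ} (hx : ∀ k ≤ N, x k ≤ V) :
    ∑ k ∈ range (N + 1), w k * (x k : ℝ) ≤ V * ∑ k ∈ range (N + 1), w k := by
  rw [mul_sum]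
  refine sum_le_sum fun k hk => ?_
  rw [mul_comm]
  exact mul_le_mul_of_nonneg_right (by exact_mod_cast hx k (by simpa [Nat.lt_succ_iff] using hk))
    (hw k)

lemma weightedSum_lt_of_lex (hw : ∀ k, 0 ≤ w k)
    (hsup : ∀ n ≤ N, (V : ℝ) * ∑ k ∈ Ico (n + 1) (N + 1), w k < w n)
    {a b : ℕ → ℕ} (hb : ∀ k ≤ N, b k ≤ V)
    {n : ℕ} (hn : n ≤ N) (hlt : b n < a n) (heq : ∀ k < n, a k = b k) :
    ∑ k ∈ range (N + 1), w k * (b k : ℝ) < ∑ k ∈ range (N + 1), w k * (a k : ℝ) := by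
  have hsplit : ∀ x : ℕ → ℕ, ∑ k ∈ range (N + 1), w k * (x k : ℝ) =
      ∑ k ∈ range n, w k * (x k : ℝ) + w n * x n +
        ∑ k ∈ Ico (n + 1) (N + 1), w k * (x k : ℝ) := fun x => by
    rw [← sum_range_succ, sum_range_add_sum_Ico _ (by omega)]
  have hlow : ∑ k ∈ range n, w k * (a k : ℝ) = ∑ k ∈ range n, w k * (b k : ℝ) :=
    sum_congr rfl fun k hk => by rw [heq k (mem_range.mp hk)]
  have hmid : w n * b n + w n ≤ w n * a n := by
    have : (b n : ℝ) + 1 ≤ a n := by exact_mod_cast hlt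
    nlinarith [hw n]
  have hhigh : ∑ k ∈ Ico (n + 1) (N + 1), w k * (b k : ℝ) ≤
      V * ∑ k ∈ Ico (n + 1) (N + 1), w k + ∑ k ∈ Ico (n + 1) (N + 1), w k * (a k : ℝ) := by
    rw [mul_sum, ← sum_add_distrib]
    refine sum_le_sum fun k hk => ?_
    have hbk : (b k : ℝ) ≤ V := by exact_mod_cast hb k (by have := (mem_Ico.mp hk).2; omega)
    nlinarith [hw k, (a k).cast_nonneg (α := ℝ)]
  rw [hsplit a, hsplit b, hlow]
  linarith [hsup n hn]

lemma exists_first_ne {a b : ℕ → ℕ} (h : ∃ k ≤ N, a k ≠ b k) :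
    ∃ n ≤ N, a n ≠ b n ∧ ∀ k < n, a k = b k := by
  classical
  obtain ⟨k, hkN, hk⟩ := h
  have hex : ∃ n, a n ≠ b n := ⟨k, hk⟩
  exact ⟨Nat.find hex, (Nat.find_min' hex hk).trans hkN, Nat.find_spec hex,
    fun j hj => not_not.mp (Nat.find_min hex hj)⟩

lemma weightedSum_lt_iff_lex (hw : ∀ k, 0 ≤ w k)
    (hsup : ∀ n ≤ N, (V : ℝ) * ∑ k ∈ Ico (n + 1) (N + 1), w k < w n)
    {a b : ℕ → ℕ} (ha : ∀ k ≤ N, a k ≤ V) (hb : ∀ k ≤ N, b k ≤ V) :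
    ∑ k ∈ range (N + 1), w k * (b k : ℝ) < ∑ k ∈ range (N + 1), w k * (a k : ℝ) ↔
      ∃ n ≤ N, b n < a n ∧ ∀ k < n, a k = b k := by
  refine ⟨fun h => ?_, fun ⟨n, hn, hlt, heq⟩ => weightedSum_lt_of_lex hw hsup hb hn hlt heq⟩
  have hne : ∃ k ≤ N, a k ≠ b k := by
    by_contra! hall
    refine h.ne (sum_congr rfl fun k hk => ?_)
    rw [hall k (by simpa [Nat.lt_succ_iff] using hk)]
  obtain ⟨n, hn, hne, heq⟩ := exists_first_ne hne
  refine ⟨n, hn, (Ne.lt_or_gt hne).resolve_left fun hab => ?_, heq⟩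
  exact h.not_gt (weightedSum_lt_of_lex hw hsup ha hn hab fun k hk => (heq k hk).symm)

end WeightedSum

lemma sub_mul_nat_lt_sub_mul_nat_iff {x y M c : ℝ} (hx : 0 ≤ x) (hxM : x ≤ M) (hy : 0 ≤ y)
    (hyM : y ≤ M) (hc : M < c) (d e : ℕ) :
    y - c * e < x - c * d ↔ d < e ∨ d = e ∧ y < x := by
  constructor
  · intro h
    rcases lt_trichotomy d e with hde | rfl | hde
    · exact Or.inl hde
    · exact Or.inr ⟨rfl, by linarith⟩
    · have : (e : ℝ) + 1 ≤ d := by exact_mod_cast hde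
      nlinarith
  · rintro (hde | ⟨rfl, hxy⟩)
    · have : (d : ℝ) + 1 ≤ e := by exact_mod_cast hde
      nlinarith
    · linarith

theorem fastscan_objective_order_general (V N : ℕ) (β lam : ℝ)
    (hβ0 : 0 < β)
    (hbeta : ∀ n ≤ N, (V : ℝ) * ∑ k ∈ Finset.Ico (n + 1) (N + 1), β ^ k < β ^ n)
    (hlam : lam > (V : ℝ) * ∑ n ∈ Finset.range (N + 1), β ^ n)
    (a b : ℕ → ℕ)
    (ha : ∀ k ≤ N, a k ≤ V) (hb : ∀ k ≤ N, b k ≤ V)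
    (d e : ℕ) :
    (∑ n ∈ Finset.range (N + 1), β ^ n * (a n : ℝ) - lam * (d : ℝ) >
        ∑ n ∈ Finset.range (N + 1), β ^ n * (b n : ℝ) - lam * (e : ℝ)) ↔
      (d < e ∨ (d = e ∧ ∃ n ≤ N, b n < a n ∧ ∀ k < n, a k = b k)) := by
  have hw : ∀ k, 0 ≤ β ^ k := fun k => (pow_pos hβ0 k).le
  rw [gt_iff_lt, sub_mul_nat_lt_sub_mul_nat_iff (weightedSum_nonneg hw a) (weightedSum_le hw ha)
    (weightedSum_nonneg hw b) (weightedSum_le hw hb) hlam, weightedSum_lt_iff_lex hw hbeta ha hb]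

/-- Under the β-condition and `λ > V · ∑_{n=0}^{N} β^n`, the
objective `f(a,d) = ∑_{n=0}^{N} β^n a_n − λ d` orders solutions first by
minimizing the stall duration and then lexicographically by quality counts
with lower levels more significant. -/
theorem fastscan_objective_order (V N : ℕ) (hV : 1 ≤ V) (β lam : ℝ)
    (hβ0 : 0 < β) (hβ1 : β < 1)
    (hbeta : ∀ n ≤ N, (V : ℝ) * ∑ k ∈ Finset.Ico (n + 1) (N + 1), β ^ k < β ^ n)
    (hlam : lam > (V : ℝ) * ∑ n ∈ Finset.range (N + 1), β ^ n)
    (a b : ℕ → ℕ)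
    (ha : ∀ k ≤ N, a k ≤ V) (hb : ∀ k ≤ N, b k ≤ V)
    (d e : ℕ) :
    (∑ n ∈ Finset.range (N + 1), β ^ n * (a n : ℝ) - lam * (d : ℝ) >
        ∑ n ∈ Finset.range (N + 1), β ^ n * (b n : ℝ) - lam * (e : ℝ)) ↔
      (d < e ∨ (d = e ∧ ∃ n ≤ N, b n < a n ∧ ∀ k < n, a k = b k)) :=
  fastscan_objective_order_general V N β lam hβ0 hbeta hlam a b ha hb d e
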